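/- If λ > 0 and u is a positive solution of the radial problem (r^{N−1} φ(u′(r)))′ = −λ r^{N−1} f(u(r)) on (0,1), u′(0) = 0, u(1) = 0, then u′(r) < 0 for all r ∈ (0,1) and u′(1) ≤ 0; in particular u is strictly decreasing on [0,1]. -/

import Mathlib

open Set Filter MeasureTheory

/-- `u` (with derivative `u'`) is a positive solution of the radial problem
`(r^(N-1) φ(u'(r)))' = -λ r^(N-1) f(u(r))` on `(0,1)`, with `u'(0) = 0`, `u(1) = 0`,
`u ∈ C¹([0,1])`, `φ ∘ u' ∈ C¹((0,1))`, and `u > 0` on `[0,1)`. -/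
structure IsPosSol (N : ℕ) (φ f : ℝ → ℝ) (lam : ℝ) (u u' : ℝ → ℝ) : Prop where
  hasDeriv : ∀ r ∈ Set.Icc (0:ℝ) 1, HasDerivAt u (u' r) r
  contDeriv : ContinuousOn u' (Set.Icc 0 1)
  pos : ∀ r ∈ Set.Ico (0:ℝ) 1, 0 < u r
  phiC1 : ∃ w : ℝ → ℝ, ContinuousOn w (Set.Ioo 0 1) ∧
    ∀ r ∈ Set.Ioo (0:ℝ) 1, HasDerivAt (fun s => φ (u' s)) (w r) r
  eqn : ∀ r ∈ Set.Ioo (0:ℝ) 1,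
    HasDerivAt (fun s => s ^ (N - 1) * φ (u' s)) (-(lam * r ^ (N - 1) * f (u r))) r
  deriv_zero : u' 0 = 0
  bd : u 1 = 0

/-! At a critical point `q` of `u` the energy `λ F(u) + Φ*(φ(u'))`, with `F' = f` and `Φ*` the
Legendre conjugate of `∫ φ`, equals `λ F(u(q))`; it decreases along the solution because of the
damping term `(N-1)/r · φ(u')`, and it is `≥ 0` at `r = 1`. Since `F < 0` on `(0, u₀]`, every
critical point in `[0,1)` lies strictly above `u₀`. If `u'(ρ) = 0` for some `ρ ∈ (0,1)`, a minimum
point of `u` on `[0, ρ]` is such a critical point, so `f(u) > 0` on `[0, ρ]` and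
`r^(N-1) φ(u'(r))` strictly decreases from `0` to `0` there, which is absurd. Hence `u'` has a
constant sign on `(0,1)`, and it cannot be positive because `u(1) = 0 < u(0)`. -/

lemma strictMonoOn_mul_self_Ici {ϕ : ℝ → ℝ} (hnn : ∀ s, 0 ≤ ϕ s)
    (hmono : StrictMonoOn ϕ (Ioi 0)) : StrictMonoOn (fun s => ϕ s * s) (Ici 0) := by
  intro a (ha : 0 ≤ a) b (hb : 0 ≤ b) hab
  have hb0 : 0 < b := ha.trans_lt hab
  have hϕb : 0 < ϕ b := (hnn (b / 2)).trans_lt (hmono (half_pos hb0) hb0 (half_lt_self hb0))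
  have hϕab : ϕ a * a ≤ ϕ b * a := by
    rcases ha.eq_or_lt with rfl | ha0
    · simp
    · exact mul_le_mul_of_nonneg_right (hmono ha0 hb0 hab).le ha0.le
  dsimp only
  nlinarith

lemma tendsto_atTop_of_const_mul_rpow_le {φ : ℝ → ℝ} {c q : ℝ} (hc : 0 < c) (hq : 0 < q)
    (h : ∀ r, 0 ≤ r → c * r ^ q ≤ φ r) : Tendsto φ atTop atTop :=
  tendsto_atTop_mono' _ ((eventually_ge_atTop 0).mono h)
    ((tendsto_rpow_atTop hq).const_mul_atTop hc)

lemma exists_orderIso_eq_of_odd {φ : ℝ → ℝ} (hmono : StrictMono φ) (hc : Continuous φ)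
    (hodd : ∀ s, φ (-s) = -φ s) (htop : Tendsto φ atTop atTop) : ∃ e : ℝ ≃o ℝ, ⇑e = φ := by
  have hbot : Tendsto φ atBot atBot := by
    have := tendsto_neg_atTop_atBot.comp (htop.comp tendsto_neg_atBot_atTop)
    simpa [Function.comp_def, hodd] using this
  have hsurj := hc.surjective htop hbot
  exact ⟨hmono.orderIsoOfSurjective φ hsurj, hmono.coe_orderIsoOfSurjective φ hsurj⟩

lemma Monotone.mul_apply_nonneg {φ : ℝ → ℝ} (hφ : Monotone φ) (h0 : φ 0 = 0) (s : ℝ) :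
    0 ≤ s * φ s := by
  rcases le_total 0 s with hs | hs
  · exact mul_nonneg hs (h0 ▸ hφ hs)
  · exact mul_nonneg_of_nonpos_of_nonpos hs (h0 ▸ hφ hs)

lemma exists_primitive_of_continuousOn_Ici {f : ℝ → ℝ} (hf : ContinuousOn f (Ici 0)) :
    ∃ F : ℝ → ℝ, F 0 = 0 ∧ ∀ t, 0 ≤ t → HasDerivAt F (f t) t := by
  have hcont : Continuous fun s => f (max s 0) :=
    hf.comp_continuous (continuous_id.max continuous_const) fun s => le_max_right s 0
  refine ⟨fun t => ∫ s in (0:ℝ)..t, f (max s 0), intervalIntegral.integral_same, fun t ht => ?_⟩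
  simpa [max_eq_left ht] using (hcont.integral_hasStrictDerivAt 0 t).hasDerivAt

namespace OrderIso

/-- For `φ = e`, this is the Legendre conjugate `Φ*` of `Φ(s) = ∫₀ˢ φ`. -/
noncomputable def conjugatePotential (e : ℝ ≃o ℝ) (t : ℝ) : ℝ :=
  ∫ s in (0:ℝ)..t, e.symm s

variable (e : ℝ ≃o ℝ)

lemma hasDerivAt_conjugatePotential (t : ℝ) :
    HasDerivAt e.conjugatePotential (e.symm t) t :=
  (e.symm.continuous.integral_hasStrictDerivAt 0 t).hasDerivAt

lemma continuous_conjugatePotential : Continuous e.conjugatePotential :=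
  continuous_iff_continuousAt.2 fun t => (e.hasDerivAt_conjugatePotential t).continuousAt

@[simp]
lemma conjugatePotential_zero : e.conjugatePotential 0 = 0 :=
  intervalIntegral.integral_same

lemma conjugatePotential_nonneg (h0 : e 0 = 0) (t : ℝ) : 0 ≤ e.conjugatePotential t := by
  have hsymm0 : e.symm 0 = 0 := by rw [e.symm_apply_eq, h0]
  rcases le_total 0 t with ht | ht
  · exact intervalIntegral.integral_nonneg ht fun s hs => hsymm0 ▸ e.symm.monotone hs.1
  · rw [conjugatePotential, intervalIntegral.integral_symm, ← intervalIntegral.integral_neg]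
    exact intervalIntegral.integral_nonneg ht fun s hs =>
      neg_nonneg.2 (hsymm0 ▸ e.symm.monotone hs.2)

end OrderIso

lemma MonotoneOn.neg_of_lt_of_unique_zero {f : ℝ → ℝ} {u0 s : ℝ} (hfm : MonotoneOn f (Ici 0))
    (hfu0 : f u0 = 0) (hzero : ∀ s : ℝ, 0 ≤ s → f s = 0 → s = u0) (hs : 0 ≤ s) (hsu : s < u0) :
    f s < 0 :=
  (hfu0 ▸ hfm hs (hs.trans hsu.le) hsu.le).lt_of_ne fun h => hsu.ne (hzero s hs h)

lemma MonotoneOn.pos_of_gt_of_unique_zero {f : ℝ → ℝ} {u0 s : ℝ} (hfm : MonotoneOn f (Ici 0))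
    (hu0 : 0 ≤ u0) (hfu0 : f u0 = 0) (hzero : ∀ s : ℝ, 0 ≤ s → f s = 0 → s = u0) (hsu : u0 < s) :
    0 < f s :=
  (hfu0 ▸ hfm hu0 (hu0.trans hsu.le) hsu.le).lt_of_ne' fun h =>
    hsu.ne' (hzero s (hu0.trans hsu.le) h)

namespace IsPosSol

variable {N : ℕ} {e : ℝ ≃o ℝ} {f : ℝ → ℝ} {lam : ℝ} {u u' : ℝ → ℝ}

lemma continuousOn (hu : IsPosSol N e f lam u u') : ContinuousOn u (Icc 0 1) :=
  fun r hr => (hu.hasDeriv r hr).continuousAt.continuousWithinAt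

lemma nonneg (hu : IsPosSol N e f lam u u') {r : ℝ} (hr : r ∈ Icc 0 1) : 0 ≤ u r := by
  rcases hr.2.lt_or_eq with h | rfl
  · exact (hu.pos r ⟨hr.1, h⟩).le
  · exact hu.bd.ge

lemma antitoneOn_energy (hu : IsPosSol N e f lam u u') (h0 : e 0 = 0) {F : ℝ → ℝ}
    (hF : ∀ t, 0 ≤ t → HasDerivAt F (f t) t) :
    AntitoneOn (fun r => lam * F (u r) + e.conjugatePotential (e (u' r))) (Icc 0 1) := by
  obtain ⟨w, -, hw⟩ := hu.phiC1
  have hderiv : ∀ r ∈ Ioo (0:ℝ) 1, HasDerivAt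
      (fun r => lam * F (u r) + e.conjugatePotential (e (u' r)))
      (lam * (f (u r) * u' r) + u' r * w r) r := by
    intro r hr
    have hFu := (hF _ (hu.nonneg (Ioo_subset_Icc_self hr))).comp r
      (hu.hasDeriv r (Ioo_subset_Icc_self hr))
    have hG := (e.hasDerivAt_conjugatePotential (e (u' r))).comp r (hw r hr)
    rw [e.symm_apply_apply] at hG
    exact (hFu.const_mul lam).add hG
  have hcont : ContinuousOn (fun r => lam * F (u r) + e.conjugatePotential (e (u' r)))
      (Icc 0 1) := by
    refine ContinuousOn.add (fun r hr => ?_) ?_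
    · exact ((hF _ (hu.nonneg hr)).continuousAt.comp_continuousWithinAt
        (hu.continuousOn r hr)).const_mul lam
    · exact e.continuous_conjugatePotential.comp_continuousOn
        (e.continuous.comp_continuousOn hu.contDeriv)
  refine antitoneOn_of_hasDerivWithinAt_nonpos (convex_Icc 0 1) hcont
    (fun r hr => (hderiv r (by rwa [interior_Icc] at hr)).hasDerivWithinAt) fun r hr => ?_
  rw [interior_Icc] at hr
  -- the equation, expanded by the product rule, turns `r^(N-1)` times the derivative into
  -- the damping term `-(N-1) r^(N-2) u' φ(u') ≤ 0`
  have hprod := ((hasDerivAt_pow (N - 1) r).mul (hw r hr)).unique (hu.eqn r hr)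
  have hdamp : 0 ≤ ((N - 1 : ℕ) : ℝ) * r ^ (N - 1 - 1) * (u' r * e (u' r)) :=
    mul_nonneg (mul_nonneg (Nat.cast_nonneg _) (pow_nonneg hr.1.le _))
      (e.monotone.mul_apply_nonneg h0 _)
  refine nonpos_of_mul_nonpos_right (a := r ^ (N - 1)) ?_ (pow_pos hr.1 _)
  linear_combination (u' r) * hprod + hdamp

lemma lt_of_deriv_eq_zero (hu : IsPosSol N e f lam u u') (hlam : 0 < lam) (h0 : e 0 = 0)
    (hfc : ContinuousOn f (Ici 0)) {u0 : ℝ} (hfneg : ∀ s, 0 ≤ s → s < u0 → f s < 0)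
    {q : ℝ} (hq : q ∈ Ico 0 1) (hq' : u' q = 0) : u0 < u q := by
  by_contra! hqu
  obtain ⟨F, hF0, hF⟩ := exists_primitive_of_continuousOn_Ici hfc
  have huq := hu.pos q hq
  have hFuq : F (u q) < 0 := by
    refine hF0 ▸ strictAntiOn_of_hasDerivWithinAt_neg (convex_Icc 0 (u q))
      (fun t ht => (hF t ht.1).continuousAt.continuousWithinAt)
      (fun t ht => (hF t (interior_subset ht).1).hasDerivWithinAt) (fun t ht => ?_)
      (left_mem_Icc.2 huq.le) (right_mem_Icc.2 huq.le) huq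
    rw [interior_Icc] at ht
    exact hfneg t ht.1.le (ht.2.trans_le hqu)
  have henergy := hu.antitoneOn_energy h0 hF ⟨hq.1, hq.2.le⟩ (right_mem_Icc.2 zero_le_one) hq.2.le
  have hG := e.conjugatePotential_nonneg h0 (e (u' 1))
  simp only [hq', h0, hu.bd, hF0, e.conjugatePotential_zero, mul_zero, zero_add, add_zero]
    at henergy
  linarith [mul_neg_of_pos_of_neg hlam hFuq]

lemma deriv_ne_zero (hu : IsPosSol N e f lam u u') (hlam : 0 < lam) (h0 : e 0 = 0)
    (hfc : ContinuousOn f (Ici 0)) {u0 : ℝ} (hfneg : ∀ s, 0 ≤ s → s < u0 → f s < 0)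
    (hfpos : ∀ s, u0 < s → 0 < f s) {ρ : ℝ} (hρ : ρ ∈ Ioo 0 1) : u' ρ ≠ 0 := by
  intro hρ'
  have hsub : Icc 0 ρ ⊆ Icc (0:ℝ) 1 := Icc_subset_Icc_right hρ.2.le
  obtain ⟨a, ha, hmin⟩ := isCompact_Icc.exists_isMinOn (nonempty_Icc.2 hρ.1.le)
    (hu.continuousOn.mono hsub)
  have hu'a : u' a = 0 := by
    rcases ha.1.eq_or_lt with rfl | ha0
    · exact hu.deriv_zero
    rcases ha.2.eq_or_lt with rfl | haρ
    · exact hρ'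
    exact (hmin.isLocalMin (Icc_mem_nhds ha0 haρ)).hasDerivAt_eq_zero (hu.hasDeriv a (hsub ha))
  have hua := hu.lt_of_deriv_eq_zero hlam h0 hfc hfneg ⟨ha.1, ha.2.trans_lt hρ.2⟩ hu'a
  have hanti : StrictAntiOn (fun s => s ^ (N - 1) * e (u' s)) (Icc 0 ρ) := by
    have hIoo : interior (Icc 0 ρ) ⊆ Ioo (0:ℝ) 1 := by
      rw [interior_Icc]; exact Ioo_subset_Ioo_right hρ.2.le
    refine strictAntiOn_of_hasDerivWithinAt_neg (convex_Icc 0 ρ)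
      ((continuous_pow _).continuousOn.mul
        (e.continuous.comp_continuousOn (hu.contDeriv.mono hsub)))
      (fun r hr => (hu.eqn r (hIoo hr)).hasDerivWithinAt) fun r hr => ?_
    rw [interior_Icc] at hr
    rw [neg_lt_zero]
    exact mul_pos (mul_pos hlam (pow_pos hr.1 _))
      (hfpos _ (hua.trans_le (hmin ⟨hr.1.le, hr.2.le⟩)))
  have := hanti (left_mem_Icc.2 hρ.1.le) (right_mem_Icc.2 hρ.1.le) hρ.1
  simp [hρ', hu.deriv_zero, h0] at this

lemma deriv_neg_of_ne_zero (hu : IsPosSol N e f lam u u')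
    (hne : ∀ r ∈ Ioo (0:ℝ) 1, u' r ≠ 0) {r : ℝ} (hr : r ∈ Ioo 0 1) : u' r < 0 := by
  have hcont : ContinuousOn u' (Ioo 0 1) := hu.contDeriv.mono Ioo_subset_Icc_self
  have hpos : ∀ s ∈ Ioo (0:ℝ) 1, 0 < u' s → ∀ t ∈ Ioo (0:ℝ) 1, 0 < u' t := by
    intro s hs hs' t ht
    by_contra! ht'
    obtain ⟨x, hx, hx0⟩ := isPreconnected_Ioo.intermediate_value ht hs hcont ⟨ht', hs'.le⟩
    exact hne x hx hx0
  refine (hne r hr).lt_or_gt.resolve_right fun hr' => ?_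
  have hmono : StrictMonoOn u (Icc 0 1) :=
    strictMonoOn_of_hasDerivWithinAt_pos (convex_Icc 0 1) hu.continuousOn
      (fun x hx => (hu.hasDeriv x (interior_subset hx)).hasDerivWithinAt) fun x hx =>
        hpos r hr hr' x (by rwa [interior_Icc] at hx)
  have := hmono (left_mem_Icc.2 zero_le_one) (right_mem_Icc.2 zero_le_one) zero_lt_one
  linarith [hu.bd, hu.pos 0 (left_mem_Ico.2 zero_lt_one)]

end IsPosSol

theorem solution_deriv_neg_general    (N : ℕ)
    (ϕ φ : ℝ → ℝ)
    (hϕc : Continuous ϕ) (hϕnn : ∀ s, 0 ≤ ϕ s) (hϕeven : ∀ s, ϕ (-s) = ϕ s)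
    (hϕmono : StrictMonoOn ϕ (Set.Ioi 0))
    (hφ : ∀ s, φ s = ϕ s * s)
    (p c1 c2 : ℝ) (hp : 1 < p) (hc2 : 0 < c2)
    (hgrow : ∀ r : ℝ, 0 ≤ r → c2 * r ^ (p - 1) ≤ φ r ∧ φ r ≤ c1 * r ^ (p - 1))
    (f : ℝ → ℝ) (hfc : ContinuousOn f (Set.Ici 0)) (hfm : MonotoneOn f (Set.Ici 0))
    (u0 : ℝ) (hu0 : 0 < u0) (hfu0 : f u0 = 0)
    (hzero : ∀ s : ℝ, 0 ≤ s → f s = 0 → s = u0)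
    (lam : ℝ) (hlam : 0 < lam) (u u' : ℝ → ℝ) (hu : IsPosSol N φ f lam u u') :
    (∀ r ∈ Set.Ioo (0:ℝ) 1, u' r < 0) ∧ u' 1 ≤ 0 ∧ StrictAntiOn u (Set.Icc 0 1) := by
  have hodd : ∀ s, φ (-s) = -φ s := fun s => by rw [hφ, hφ, hϕeven]; ring
  have hφfun : φ = fun s => ϕ s * s := funext hφ
  obtain ⟨e, rfl⟩ := exists_orderIso_eq_of_odd
    (strictMono_of_odd_strictMonoOn_nonneg hodd (hφfun ▸ strictMonoOn_mul_self_Ici hϕnn hϕmono))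
    (hφfun ▸ hϕc.mul continuous_id) hodd
    (tendsto_atTop_of_const_mul_rpow_le hc2 (by linarith) fun r hr => (hgrow r hr).1)
  have he0 : e 0 = 0 := by rw [hφ, mul_zero]
  have hfneg : ∀ s, 0 ≤ s → s < u0 → f s < 0 := fun _ =>
    hfm.neg_of_lt_of_unique_zero hfu0 hzero
  have hfpos : ∀ s, u0 < s → 0 < f s := fun _ => hfm.pos_of_gt_of_unique_zero hu0.le hfu0 hzero
  have hneg : ∀ r ∈ Ioo (0:ℝ) 1, u' r < 0 := fun _ =>
    hu.deriv_neg_of_ne_zero fun _ => hu.deriv_ne_zero hlam he0 hfc hfneg hfpos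
  refine ⟨hneg, ?_, ?_⟩
  · exact ContinuousWithinAt.closure_le (s := Ioo 0 1) (by simp)
      ((hu.contDeriv 1 (right_mem_Icc.2 zero_le_one)).mono Ioo_subset_Icc_self)
      continuousWithinAt_const fun r hr => (hneg r hr).le
  · exact strictAntiOn_of_hasDerivWithinAt_neg (convex_Icc 0 1) hu.continuousOn
      (fun x hx => (hu.hasDeriv x (interior_subset hx)).hasDerivWithinAt) fun x hx =>
        hneg x (by rwa [interior_Icc] at hx)

theorem solution_deriv_neg    (N : ℕ) (hN : 1 < N)
    (ϕ φ : ℝ → ℝ)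
    (hϕc : Continuous ϕ) (hϕnn : ∀ s, 0 ≤ ϕ s) (hϕeven : ∀ s, ϕ (-s) = ϕ s)
    (hϕdiff : ∀ s : ℝ, s ≠ 0 → DifferentiableAt ℝ ϕ s)
    (hϕmono : StrictMonoOn ϕ (Set.Ioi 0))
    (hφ : ∀ s, φ s = ϕ s * s)
    (p c1 c2 : ℝ) (hp : 1 < p) (hc1 : 0 < c1) (hc2 : 0 < c2)
    (hgrow : ∀ r : ℝ, 0 ≤ r → c2 * r ^ (p - 1) ≤ φ r ∧ φ r ≤ c1 * r ^ (p - 1))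
    (f : ℝ → ℝ) (hfc : ContinuousOn f (Set.Ici 0)) (hfm : MonotoneOn f (Set.Ici 0))
    (hf0 : f 0 < 0) (u0 : ℝ) (hu0 : 0 < u0) (hfu0 : f u0 = 0)
    (hzero : ∀ s : ℝ, 0 ≤ s → f s = 0 → s = u0)
    (lam : ℝ) (hlam : 0 < lam) (u u' : ℝ → ℝ) (hu : IsPosSol N φ f lam u u') :
    (∀ r ∈ Set.Ioo (0:ℝ) 1, u' r < 0) ∧ u' 1 ≤ 0 ∧ StrictAntiOn u (Set.Icc 0 1) :=
  solution_deriv_neg_general N ϕ φ hϕc hϕnn hϕeven hϕmono hφ p c1 c2 hp hc2 hgrow f hfc hfm u0 hu0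
    hfu0 hzero lam hlam u u' hu
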